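/- Let q ≥ 2 be a prime power. Then lim_{n→∞} binom(n, ⌊n/2⌋)_q / q^{⌊n/2⌋·⌈n/2⌉} = 1 / K_q. -/

import Mathlib

open Filter Matrix
open scoped Topology

/-- The `q`-binomial coefficient `binom(n,k)_q = ∏_{j=0}^{k-1} (q^{n-j}-1)/(q^{k-j}-1)`. -/
noncomputable def qBinom (q n k : ℕ) : ℝ :=
  ∏ j ∈ Finset.range k, ((q : ℝ) ^ (n - j) - 1) / ((q : ℝ) ^ (k - j) - 1)

/-- `S(n) = ∑_{k=0}^n binom(n,k)_q`. -/
noncomputable def Sq (q n : ℕ) : ℝ := ∑ k ∈ Finset.range (n + 1), qBinom q n k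

/-- `K_q = ∏_{j=1}^∞ (1 - q^{-j})`. -/
noncomputable def Kq (q : ℕ) : ℝ := ∏' j : ℕ, (1 - ((q : ℝ))⁻¹ ^ (j + 1))

/-- `K_q(k) = ∏_{j=1}^{k} (1 - q^{-j})`. -/
noncomputable def KqTrunc (q k : ℕ) : ℝ := ∏ j ∈ Finset.range k, (1 - ((q : ℝ))⁻¹ ^ (j + 1))

/-- Jacobi theta constant `θ₂(w) = ∑_{k∈ℤ} w^{(k+1/2)²}`. -/
noncomputable def theta2 (w : ℝ) : ℝ := ∑' k : ℤ, w ^ (((k : ℝ) + 1/2) ^ 2)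

/-- Jacobi theta constant `θ₃(w) = ∑_{k∈ℤ} w^{k²}`. -/
noncomputable def theta3 (w : ℝ) : ℝ := ∑' k : ℤ, w ^ ((k : ℝ) ^ 2)

/-- Condition (⋆): `n²/4 − ε·n + A·√n − k(n)(n−k(n)) → −∞`. -/
def StarCond (A ε : ℝ) (k : ℕ → ℕ) : Prop :=
  Tendsto (fun n : ℕ =>
    (n : ℝ) ^ 2 / 4 - ε * n + A * Real.sqrt n - (k n : ℝ) * ((n : ℝ) - (k n : ℝ)))
    atTop atBot

/-- The set of permutation matrices inside `GL n F`. -/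
def permSet (F : Type) [Field F] (n : ℕ) : Set (GL (Fin n) F) :=
  {M | ∃ σ : Equiv.Perm (Fin n), (M : Matrix (Fin n) (Fin n) F) = σ.permMatrix F}

/-- The set of invertible diagonal matrices inside `GL n F`. -/
def diagSet (F : Type) [Field F] (n : ℕ) : Set (GL (Fin n) F) :=
  {M | ∃ d : Fin n → F, (M : Matrix (Fin n) (Fin n) F) = Matrix.diagonal d}

/-- The permutation group: subgroup of `GL n F` formed by the permutation matrices. -/
def PermGroup (F : Type) [Field F] (n : ℕ) : Subgroup (GL (Fin n) F) :=
  Subgroup.closure (permSet F n)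

/-- The monomial group: subgroup of `GL n F` generated by permutation and diagonal matrices. -/
def MonomialGroup (F : Type) [Field F] (n : ℕ) : Subgroup (GL (Fin n) F) :=
  Subgroup.closure (permSet F n ∪ diagSet F n)

/-- Number of orbits of a subgroup `G ≤ GL n F` acting on the Grassmannian of
`k`-dimensional subspaces of `F^n` (by taking images of subspaces). -/
noncomputable def numClassesDim {n : ℕ} (F : Type) [Field F]
    (G : Subgroup (GL (Fin n) F)) (k : ℕ) : ℕ :=
  Nat.card (Quot (fun V W : {V : Submodule F (Fin n → F) // Module.finrank F V = k} =>
    ∃ M ∈ G, Submodule.map (Matrix.toLin' (M : Matrix (Fin n) (Fin n) F)) V.1 = W.1))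

/-- Number of orbits of a subgroup `G ≤ GL n F` acting on the set of all subspaces of `F^n`. -/
noncomputable def numClasses {n : ℕ} (F : Type) [Field F]
    (G : Subgroup (GL (Fin n) F)) : ℕ :=
  Nat.card (Quot (fun V W : Submodule F (Fin n → F) =>
    ∃ M ∈ G, Submodule.map (Matrix.toLin' (M : Matrix (Fin n) (Fin n) F)) V = W))

/-- Semilinear orbit relation: `W` is the image of `V` under the semilinear transformation
given by applying the field automorphism `σ` componentwise followed by a monomial matrix. -/
def semiRel (F : Type) [Field F] (n : ℕ) (V W : Submodule F (Fin n → F)) : Prop :=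
  ∃ σ : F ≃+* F, ∃ M ∈ MonomialGroup F n,
    (W : Set (Fin n → F)) =
      (fun x => Matrix.mulVec (M : Matrix (Fin n) (Fin n) F) (fun i => σ (x i))) '' (V : Set (Fin n → F))

/-- Number of semilinear equivalence classes of `k`-dimensional subspaces of `F^n`. -/
noncomputable def numClassesDimSemi (F : Type) [Field F] (n k : ℕ) : ℕ :=
  Nat.card (Quot (fun V W : {V : Submodule F (Fin n → F) // Module.finrank F V = k} =>
    semiRel F n V.1 W.1))

/-- Number of semilinear equivalence classes of subspaces of `F^n`. -/
noncomputable def numClassesSemi (F : Type) [Field F] (n : ℕ) : ℕ :=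
  Nat.card (Quot (fun V W : Submodule F (Fin n → F) => semiRel F n V W))

/-! Writing `q^a - 1 = q^a (1 - q^{-a})` turns the `q`-binomial coefficient into
`q^{k(n-k)} K_q(n) / (K_q(n-k) K_q(k))` with truncated products `K_q(·)`. For the central
coefficient all three truncations tend to `K_q > 0`, so the normalised coefficient tends to
`K_q / K_q² = 1 / K_q`. -/

open Finset

section OneSubPow

variable {x : ℝ}

lemma one_sub_pow_pos (h0 : 0 ≤ x) (h1 : x < 1) {i : ℕ} (hi : i ≠ 0) : 0 < 1 - x ^ i :=
  sub_pos.2 (pow_lt_one₀ h0 h1 hi)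

lemma summable_log_one_sub_pow_succ (h0 : 0 ≤ x) (h1 : x < 1) :
    Summable fun j : ℕ => Real.log (1 - x ^ (j + 1)) := by
  have hgeom : Summable fun j : ℕ => x ^ (j + 1) :=
    (summable_nat_add_iff 1).2 (summable_geometric_of_lt_one h0 h1)
  simpa only [sub_eq_add_neg] using Real.summable_log_one_add_of_summable hgeom.neg

lemma hasProd_one_sub_pow_succ (h0 : 0 ≤ x) (h1 : x < 1) :
    HasProd (fun j : ℕ => 1 - x ^ (j + 1)) (Real.exp (∑' j : ℕ, Real.log (1 - x ^ (j + 1)))) :=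
  Real.hasProd_of_hasSum_log (fun _ => one_sub_pow_pos h0 h1 (Nat.succ_ne_zero _))
    (summable_log_one_sub_pow_succ h0 h1).hasSum

end OneSubPow

section Kq

variable {q : ℕ}

lemma inv_natCast_lt_one (hq : 1 < q) : ((q : ℝ))⁻¹ < 1 :=
  inv_lt_one_of_one_lt₀ (by exact_mod_cast hq)

lemma hasProd_Kq (hq : 1 < q) :
    HasProd (fun j : ℕ => 1 - ((q : ℝ))⁻¹ ^ (j + 1)) (Kq q) :=
  (hasProd_one_sub_pow_succ (by positivity) (inv_natCast_lt_one hq)).multipliable.hasProd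

lemma Kq_pos (hq : 1 < q) : 0 < Kq q := by
  rw [(hasProd_Kq hq).unique (hasProd_one_sub_pow_succ (by positivity) (inv_natCast_lt_one hq))]
  exact Real.exp_pos _

lemma tendsto_KqTrunc (hq : 1 < q) : Tendsto (KqTrunc q) atTop (𝓝 (Kq q)) :=
  (hasProd_Kq hq).tendsto_prod_nat

lemma KqTrunc_pos (hq : 1 < q) (k : ℕ) : 0 < KqTrunc q k :=
  prod_pos fun _ _ => one_sub_pow_pos (by positivity) (inv_natCast_lt_one hq) (Nat.succ_ne_zero _)

lemma KqTrunc_add (q m k : ℕ) :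
    KqTrunc q (m + k) = KqTrunc q m * ∏ i ∈ range k, (1 - ((q : ℝ))⁻¹ ^ (m + i + 1)) :=
  prod_range_add _ m k

end Kq

section QBinom

lemma qBinom_add_eq_prod (q m k : ℕ) :
    qBinom q (m + k) k = ∏ i ∈ range k, (((q : ℝ) ^ (m + i + 1) - 1) / ((q : ℝ) ^ (i + 1) - 1)) := by
  rw [qBinom, ← prod_range_reflect]
  refine prod_congr rfl fun i hi => ?_
  have hi : i < k := mem_range.1 hi
  rw [show m + k - (k - 1 - i) = m + i + 1 by omega, show k - (k - 1 - i) = i + 1 by omega]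

/-- Both sides vanish when `c ^ i = 1`, so no hypothesis beyond `c ≠ 0` is needed. -/
lemma pow_add_sub_one_div_pow_sub_one {c : ℝ} (hc : c ≠ 0) (m i : ℕ) :
    (c ^ (m + i) - 1) / (c ^ i - 1) = c ^ m * ((1 - c⁻¹ ^ (m + i)) / (1 - c⁻¹ ^ i)) := by
  have hsplit : ∀ a : ℕ, c ^ a - 1 = c ^ a * (1 - c⁻¹ ^ a) := fun a => by
    rw [mul_one_sub, ← mul_pow, mul_inv_cancel₀ hc, one_pow]
  rw [hsplit, hsplit, mul_div_mul_comm, pow_add, mul_div_cancel_right₀ _ (pow_ne_zero i hc)]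

lemma qBinom_div_pow_eq {q : ℕ} (hq : 1 < q) {n k : ℕ} (hk : k ≤ n) :
    qBinom q n k / (q : ℝ) ^ (k * (n - k))
      = KqTrunc q n / (KqTrunc q (n - k) * KqTrunc q k) := by
  obtain ⟨m, rfl⟩ : ∃ m, n = m + k := ⟨n - k, by omega⟩
  have hq0 : (q : ℝ) ≠ 0 := by positivity
  have hfactor : ∀ i : ℕ, ((q : ℝ) ^ (m + i + 1) - 1) / ((q : ℝ) ^ (i + 1) - 1)
      = (q : ℝ) ^ m * ((1 - ((q : ℝ))⁻¹ ^ (m + i + 1)) / (1 - ((q : ℝ))⁻¹ ^ (i + 1))) := fun i => by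
    rw [add_assoc, pow_add_sub_one_div_pow_sub_one hq0]
  rw [Nat.add_sub_cancel, qBinom_add_eq_prod, prod_congr rfl fun i _ => hfactor i,
    prod_mul_distrib, prod_const, card_range, prod_div_distrib, KqTrunc_add, ← pow_mul']
  change _ * (_ / KqTrunc q k) / _ = _
  have hKm := KqTrunc_pos hq m
  have hKk := KqTrunc_pos hq k
  field_simp

end QBinom

theorem stmt7 (q : ℕ) (hq : IsPrimePow q) :
    Tendsto (fun n : ℕ => qBinom q n (n / 2) / (q : ℝ) ^ ((n / 2) * ((n + 1) / 2)))
      atTop (𝓝 (1 / Kq q)) := by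
  have hq1 : 1 < q := hq.one_lt
  have hK := tendsto_KqTrunc hq1
  have hfloor : Tendsto (fun n : ℕ => n / 2) atTop atTop := Nat.tendsto_div_const_atTop two_ne_zero
  have hceil : Tendsto (fun n : ℕ => (n + 1) / 2) atTop atTop :=
    hfloor.comp (tendsto_add_atTop_nat 1)
  have hKpos := Kq_pos hq1
  have hlim := hK.div ((hK.comp hceil).mul (hK.comp hfloor)) (by positivity)
  rw [show Kq q / (Kq q * Kq q) = 1 / Kq q by field_simp] at hlim
  refine hlim.congr fun n => ?_
  have hn := qBinom_div_pow_eq hq1 (Nat.div_le_self n 2)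
  rw [show n - n / 2 = (n + 1) / 2 by omega] at hn
  exact hn.symm
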